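/- Let (μ, ω, λ) and (μ̃, ω̃, λ̃) be univariate skew normal parameters (ω, ω̃ > 0), with Δ = ω·λ/√(1+λ²), Γ = ω²/(1+λ²), and analogously Δ̃, Γ̃. Let MGF and M̃GF denote the corresponding skew normal moment generating functions MGF(t) = 2·exp(μt + t²ω²/2)·Φ(Δt) and M̃GF(t) = 2·exp(μ̃t + t²ω̃²/2)·Φ(Δ̃t). If Γ̃ − Γ > 0, then for every t ∈ ℝ with t ≠ 0 and Δ·t ≤ 0, lim_{c→∞} MGF(ct)/M̃GF(ct) = 0. -/

import Mathlib

/-!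
Chernoff's bound `Φ(y) ≤ exp (-y²/2)` for `y ≤ 0` gives `MGF(x) ≤ 2 exp (μx + Γx²/2)`
whenever `Δx ≤ 0`, while integrating the density over `(y - 1, y)` gives `Φ(y) ≥ φ(|y| + 1)`
and hence `M̃GF(x) ≥ 2 φ(0) exp (μ̃x + Γ̃x²/2 - |Δ̃x| - 1/2)`; both use `ω² = Δ² + Γ`.
Along `x = ct` the ratio is therefore bounded by the exponential of a quadratic in `c` with
leading coefficient `(Γ - Γ̃)t²/2 < 0`.
-/

open Filter MeasureTheory

noncomputable section

/-- Standard normal cdf Φ. -/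
def stdNormalCdf (x : ℝ) : ℝ :=
  ∫ u in Set.Iio x, (Real.sqrt (2 * Real.pi))⁻¹ * Real.exp (-(u ^ 2) / 2)

/-- The skew normal moment generating function of SN(μ, ω, λ),
with Δ = ω·λ/√(1+λ²). -/
def snMGF (μ ω lam : ℝ) (t : ℝ) : ℝ :=
  2 * Real.exp (μ * t + t ^ 2 * ω ^ 2 / 2) *
    stdNormalCdf (ω * lam / Real.sqrt (1 + lam ^ 2) * t)

open ProbabilityTheory Real

lemma gaussianPDFReal_zero_one (x : ℝ) :
    gaussianPDFReal 0 1 x = (√(2 * π))⁻¹ * exp (-x ^ 2 / 2) := by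
  simp [gaussianPDFReal]

lemma stdNormalCdf_eq_setIntegral (y : ℝ) :
    stdNormalCdf y = ∫ u in Set.Iio y, gaussianPDFReal 0 1 u := by
  simp only [stdNormalCdf, gaussianPDFReal_zero_one]

lemma gaussianPDFReal_le_stdNormalCdf (y : ℝ) : gaussianPDFReal 0 1 (|y| + 1) ≤ stdNormalCdf y := by
  have hφ := integrable_gaussianPDFReal 0 1
  calc gaussianPDFReal 0 1 (|y| + 1) = ∫ _ in Set.Ioo (y - 1) y, gaussianPDFReal 0 1 (|y| + 1) := by
        simp [Real.volume_real_Ioo]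
    _ ≤ ∫ u in Set.Ioo (y - 1) y, gaussianPDFReal 0 1 u := by
        refine setIntegral_mono_on (integrableOn_const (by simp [Real.volume_Ioo]))
          hφ.integrableOn measurableSet_Ioo fun u hu => ?_
        have hu' : u ^ 2 ≤ (|y| + 1) ^ 2 :=
          sq_le_sq' (by linarith [hu.1, neg_abs_le y]) (by linarith [hu.2, le_abs_self y])
        simp only [gaussianPDFReal_zero_one]
        gcongr
    _ ≤ ∫ u in Set.Iio y, gaussianPDFReal 0 1 u :=
        setIntegral_mono_set hφ.integrableOn (ae_of_all _ (gaussianPDFReal_nonneg 0 1))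
          (ae_of_all _ Set.Ioo_subset_Iio_self)
    _ = stdNormalCdf y := (stdNormalCdf_eq_setIntegral y).symm

lemma stdNormalCdf_pos (y : ℝ) : 0 < stdNormalCdf y :=
  (gaussianPDFReal_pos 0 1 _ one_ne_zero).trans_le (gaussianPDFReal_le_stdNormalCdf y)

lemma stdNormalCdf_le_exp {y : ℝ} (hy : y ≤ 0) : stdNormalCdf y ≤ exp (-y ^ 2 / 2) := by
  have hψ := (integrable_gaussianPDFReal y 1).const_mul (exp (-y ^ 2 / 2))
  rw [stdNormalCdf_eq_setIntegral]
  calc ∫ u in Set.Iio y, gaussianPDFReal 0 1 u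
      ≤ ∫ u in Set.Iio y, exp (-y ^ 2 / 2) * gaussianPDFReal y 1 u := by
        refine setIntegral_mono_on (integrable_gaussianPDFReal 0 1).integrableOn
          hψ.integrableOn measurableSet_Iio fun u (hu : u < y) => ?_
        -- `u ≤ y ≤ 0` gives `u² ≥ y² + (u - y)²`
        simp only [gaussianPDFReal, NNReal.coe_one, mul_one, sub_zero]
        rw [mul_left_comm, ← exp_add]
        gcongr
        nlinarith
    _ ≤ ∫ u, exp (-y ^ 2 / 2) * gaussianPDFReal y 1 u :=
        setIntegral_le_integral hψ
          (ae_of_all _ fun u => mul_nonneg (exp_nonneg _) (gaussianPDFReal_nonneg y 1 u))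
    _ = exp (-y ^ 2 / 2) := by
        rw [integral_const_mul, integral_gaussianPDFReal_eq_one y one_ne_zero, mul_one]

def snDelta (ω lam : ℝ) : ℝ := ω * lam / √(1 + lam ^ 2)

def snGamma (ω lam : ℝ) : ℝ := ω ^ 2 / (1 + lam ^ 2)

lemma snDelta_sq_add_snGamma (ω lam : ℝ) : snDelta ω lam ^ 2 + snGamma ω lam = ω ^ 2 := by
  have h : (0 : ℝ) < 1 + lam ^ 2 := by positivity
  rw [snDelta, snGamma, div_pow, sq_sqrt h.le]
  field_simp
  ring

lemma snMGF_pos (μ ω lam x : ℝ) : 0 < snMGF μ ω lam x :=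
  mul_pos (by positivity) (stdNormalCdf_pos _)

lemma snMGF_le {μ ω lam x : ℝ} (hx : snDelta ω lam * x ≤ 0) :
    snMGF μ ω lam x ≤ 2 * exp (μ * x + snGamma ω lam * x ^ 2 / 2) := by
  calc snMGF μ ω lam x ≤ 2 * exp (μ * x + x ^ 2 * ω ^ 2 / 2) * exp (-(snDelta ω lam * x) ^ 2 / 2) :=
        mul_le_mul_of_nonneg_left (stdNormalCdf_le_exp hx) (by positivity)
    _ = 2 * exp (μ * x + snGamma ω lam * x ^ 2 / 2) := by
        rw [mul_assoc, ← exp_add, ← snDelta_sq_add_snGamma ω lam]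
        congr 2
        ring

lemma le_snMGF (μ ω lam x : ℝ) :
    2 * (√(2 * π))⁻¹ * exp (μ * x + snGamma ω lam * x ^ 2 / 2 - |snDelta ω lam * x| - 1 / 2)
      ≤ snMGF μ ω lam x := by
  calc 2 * (√(2 * π))⁻¹ * exp (μ * x + snGamma ω lam * x ^ 2 / 2 - |snDelta ω lam * x| - 1 / 2)
      = 2 * exp (μ * x + x ^ 2 * ω ^ 2 / 2) * gaussianPDFReal 0 1 (|snDelta ω lam * x| + 1) := by
        have hexp : μ * x + snGamma ω lam * x ^ 2 / 2 - |snDelta ω lam * x| - 1 / 2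
            = (μ * x + x ^ 2 * ω ^ 2 / 2) + -(|snDelta ω lam * x| + 1) ^ 2 / 2 := by
          rw [← snDelta_sq_add_snGamma ω lam]
          linear_combination (1 / 2 : ℝ) * sq_abs (snDelta ω lam * x)
        rw [hexp, exp_add, gaussianPDFReal_zero_one]
        ring
    _ ≤ snMGF μ ω lam x :=
        mul_le_mul_of_nonneg_left (gaussianPDFReal_le_stdNormalCdf _) (by positivity)

lemma snMGF_div_snMGF_le {μ ω lam μ' ω' lam' x : ℝ} (hx : snDelta ω lam * x ≤ 0) :
    snMGF μ ω lam x / snMGF μ' ω' lam' x ≤ √(2 * π) * exp ((μ - μ') * x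
      + (snGamma ω lam - snGamma ω' lam') * x ^ 2 / 2 + |snDelta ω' lam' * x| + 1 / 2) := by
  set A := μ * x + snGamma ω lam * x ^ 2 / 2
  set B := μ' * x + snGamma ω' lam' * x ^ 2 / 2 - |snDelta ω' lam' * x| - 1 / 2
  calc snMGF μ ω lam x / snMGF μ' ω' lam' x ≤ 2 * exp A / (2 * (√(2 * π))⁻¹ * exp B) :=
        div_le_div₀ (by positivity) (snMGF_le hx) (by positivity) (le_snMGF μ' ω' lam' x)
    _ = √(2 * π) * exp (A - B) := by
        clear_value A B
        rw [exp_sub]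
        field_simp
    _ = _ := by
        congr 2
        ring

lemma tendsto_quadratic_atBot {a : ℝ} (ha : a < 0) (b c : ℝ) :
    Tendsto (fun x : ℝ => a * x ^ 2 + b * x + c) atTop atBot := by
  have hlin : Tendsto (fun x : ℝ => a * x + b) atTop atBot :=
    tendsto_atBot_add_const_right _ b (tendsto_id.const_mul_atTop_of_neg ha)
  refine tendsto_atBot_add_const_right _ c ((tendsto_id.atTop_mul_atBot₀ hlin).congr fun x => ?_)
  simp only [id]
  ring

theorem stmt11_general (μ ω lam μ' ω' lam' : ℝ)
    (hΓ : 0 < ω' ^ 2 / (1 + lam' ^ 2) - ω ^ 2 / (1 + lam ^ 2)) :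
    ∀ t : ℝ, t ≠ 0 → ω * lam / Real.sqrt (1 + lam ^ 2) * t ≤ 0 →
      Tendsto (fun c : ℝ => snMGF μ ω lam (c * t) / snMGF μ' ω' lam' (c * t))
        atTop (nhds 0) := by
  intro t ht hΔt
  set a := (snGamma ω lam - snGamma ω' lam') * t ^ 2 / 2
  set b := (μ - μ') * t + |snDelta ω' lam' * t|
  have ha : a < 0 :=
    div_neg_of_neg_of_pos (mul_neg_of_neg_of_pos (sub_neg.2 (sub_pos.1 hΓ)) (by positivity))
      two_pos
  have hbound : Tendsto (fun c => √(2 * π) * exp (a * c ^ 2 + b * c + 1 / 2)) atTop (nhds 0) := by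
    simpa only [mul_zero, Function.comp_def] using
      (tendsto_exp_atBot.comp (tendsto_quadratic_atBot ha b (1 / 2))).const_mul √(2 * π)
  refine squeeze_zero'
    (Eventually.of_forall fun c => (div_pos (snMGF_pos ..) (snMGF_pos ..)).le) ?_ hbound
  filter_upwards [eventually_ge_atTop 0] with c hc
  have hΔct : snDelta ω lam * (c * t) ≤ 0 := by
    rw [mul_left_comm]
    exact mul_nonpos_of_nonneg_of_nonpos hc hΔt
  refine (snMGF_div_snMGF_le hΔct).trans_eq ?_
  simp only [a, b, abs_mul, abs_of_nonneg hc]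
  congr 2
  ring

theorem stmt11 (μ ω lam μ' ω' lam' : ℝ) (hω : 0 < ω) (hω' : 0 < ω')
    (hΓ : 0 < ω' ^ 2 / (1 + lam' ^ 2) - ω ^ 2 / (1 + lam ^ 2)) :
    ∀ t : ℝ, t ≠ 0 → ω * lam / Real.sqrt (1 + lam ^ 2) * t ≤ 0 →
      Tendsto (fun c : ℝ => snMGF μ ω lam (c * t) / snMGF μ' ω' lam' (c * t))
        atTop (nhds 0) :=
  stmt11_general μ ω lam μ' ω' lam' hΓ
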